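/- arXiv:2103.04332 — 2 statements merged into one kernel-verified Lean document; each statement's English description precedes it below -/
import Mathlib

section
/- A permutation π of [n] avoids all of the patterns 321, 2413, and 3142 if and only if π can be written as a direct sum of permutations each of which is either the trivial permutation 1 or of the form id_{r1} ⊖ id_{r2} for some r1, r2 ≥ 1. -/
/-!
The patterns 321, 2413 and 3142 are sum-indecomposable, so an occurrence of one of them in a
direct sum `x ⊕ y` lies inside `x` or inside `y`. A pattern occurring in `id_r ⊖ id_s` is again
a skew sum of two increasing runs, which none of the three is. Hence every direct sum of blocks
avoids them.

Conversely, write `π = P 1 R`. Avoiding 321 makes `P` increasing. If `P` is nonempty with least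
entry `a` and largest entry `c`, avoiding 2413 (as `a c 1 w`) forces `P` to be the interval
`a, …, c`; avoiding 3142 (as `c 1 z w`) forces the entries of `R` below `a` to precede those above
`c`, and avoiding 321 (as `a x y`) makes the former increasing. So `π` begins with the block
`P 1 2 ⋯ (a-1) = id ⊖ id`, or with `1` when `P` is empty, and what follows is a shifted avoider of
smaller size.
-/

/-- `π` is (the one-line notation of) a permutation of `{1,…,n}`. -/
def IsPermList (n : ℕ) (π : List ℕ) : Prop := π.Perm (List.range' 1 n)

/-- Two sequences are order-isomorphic. -/
def OrdIso (u v : List ℕ) : Prop :=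
  u.length = v.length ∧
    ∀ i j : ℕ, i < u.length → j < u.length → (u[i]! < u[j]! ↔ v[i]! < v[j]!)

/-- `π` contains the pattern `σ`: some subsequence of `π` is order-isomorphic to `σ`. -/
def ContainsPat (π σ : List ℕ) : Prop := ∃ t : List ℕ, t.Sublist π ∧ OrdIso t σ

/-- `π` avoids the pattern `σ`. -/
def AvoidsPat (π σ : List ℕ) : Prop := ¬ ContainsPat π σ

/-- Direct sum of permutations in one-line notation. -/
def dsumL (x y : List ℕ) : List ℕ := x ++ y.map (· + x.length)

/-- Skew sum of permutations in one-line notation. -/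
def ssumL (x y : List ℕ) : List ℕ := x.map (· + y.length) ++ y

/-- The identity permutation of size `r` in one-line notation. -/
def idL (r : ℕ) : List ℕ := List.range' 1 r

/-- `π` avoids all of the patterns 321, 2413 and 3142. -/
def AvoidsAll (π : List ℕ) : Prop :=
  AvoidsPat π [3, 2, 1] ∧ AvoidsPat π [2, 4, 1, 3] ∧ AvoidsPat π [3, 1, 4, 2]

theorem ContainsPat.of_sublist {π π' σ : List ℕ} (h : ContainsPat π σ) (hπ : π.Sublist π') :
    ContainsPat π' σ :=
  let ⟨t, ht, hiso⟩ := h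
  ⟨t, ht.trans hπ, hiso⟩

theorem ContainsPat.of_map {f : ℕ → ℕ} {l σ : List ℕ}
    (hf : ∀ x ∈ l, ∀ y ∈ l, x < y ↔ f x < f y) (h : ContainsPat (l.map f) σ) :
    ContainsPat l σ := by
  obtain ⟨_, ht, hlen, hiso⟩ := h
  obtain ⟨t, hsub, rfl⟩ := List.sublist_map_iff.1 ht
  rw [List.length_map] at hlen hiso
  refine ⟨t, hsub, hlen, fun i j hi hj => ?_⟩
  rw [← hiso i j hi hj]
  simp only [getElem!_pos t i hi, getElem!_pos t j hj, getElem!_pos (t.map f) i (by simpa),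
    getElem!_pos (t.map f) j (by simpa), List.getElem_map]
  exact hf _ (hsub.subset (List.getElem_mem hi)) _ (hsub.subset (List.getElem_mem hj))

/-- `σ` has the order pattern of `α ⊕ β` with `|α| = k` and both summands nonempty. -/
def IsSumDecomposable (σ : List ℕ) : Prop :=
  ∃ k < σ.length, 0 < k ∧ ∀ j < σ.length, ∀ i < k, k ≤ j → σ[i]! < σ[j]!

theorem ContainsPat.of_append_of_lt {x y σ : List ℕ} (hxy : ∀ a ∈ x, ∀ b ∈ y, a < b)
    (h : ContainsPat (x ++ y) σ) :
    ContainsPat x σ ∨ ContainsPat y σ ∨ IsSumDecomposable σ := by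
  obtain ⟨_, ht, hlen, hiso⟩ := h
  obtain ⟨t₁, t₂, rfl, h₁, h₂⟩ := List.sublist_append_iff.1 ht
  rcases eq_or_ne t₂ [] with rfl | ht₂
  · exact Or.inl ⟨t₁, h₁, by simpa using hlen, by simpa using hiso⟩
  rcases eq_or_ne t₁ [] with rfl | ht₁
  · exact Or.inr (Or.inl ⟨t₂, h₂, by simpa using hlen, by simpa using hiso⟩)
  rw [List.length_append] at hlen hiso
  refine Or.inr (Or.inr ⟨t₁.length, ?_, List.length_pos_of_ne_nil ht₁, fun j hj i hi hij => ?_⟩)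
  · have := List.length_pos_of_ne_nil ht₂
    omega
  rw [← hiso i j (by omega) (by omega), getElem!_pos _ i (by simp; omega),
    getElem!_pos _ j (by simp; omega), List.getElem_append_left hi, List.getElem_append_right hij]
  exact hxy _ (h₁.subset (List.getElem_mem _)) _ (h₂.subset (List.getElem_mem _))

/-- `σ` has the order pattern of `id_k ⊖ id_(|σ|-k)`. -/
def IsSkewSumOfIncreasing (σ : List ℕ) : Prop :=
  ∃ k ≤ σ.length, ∀ j < σ.length, ∀ i < j, (σ[i]! < σ[j]! ↔ j < k ∨ k ≤ i)

theorem ContainsPat.isSkewSumOfIncreasing {u w σ : List ℕ} (hu : u.Pairwise (· < ·))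
    (hw : w.Pairwise (· < ·)) (huw : ∀ a ∈ u, ∀ b ∈ w, b < a) (h : ContainsPat (u ++ w) σ) :
    IsSkewSumOfIncreasing σ := by
  obtain ⟨_, ht, hlen, hiso⟩ := h
  obtain ⟨t₁, t₂, rfl, h₁, h₂⟩ := List.sublist_append_iff.1 ht
  rw [List.length_append] at hlen hiso
  refine ⟨t₁.length, by omega, fun j hj i hij => ?_⟩
  rw [← hiso i j (by omega) (by omega), getElem!_pos _ i (by simp; omega),
    getElem!_pos _ j (by simp; omega)]
  rcases lt_or_ge j t₁.length with hj₁ | hj₁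
  · rw [List.getElem_append_left (hij.trans hj₁), List.getElem_append_left hj₁]
    simpa [hj₁] using List.pairwise_iff_getElem.1 (hu.sublist h₁) i j _ _ hij
  rcases lt_or_ge i t₁.length with hi₁ | hi₁
  · rw [List.getElem_append_left hi₁, List.getElem_append_right hj₁]
    simpa [hj₁.not_gt, hi₁.not_ge] using
      (huw _ (h₁.subset (List.getElem_mem _)) _ (h₂.subset (List.getElem_mem _))).le
  · rw [List.getElem_append_right hi₁, List.getElem_append_right hj₁]
    simpa [hi₁] using List.pairwise_iff_getElem.1 (hw.sublist h₂) _ _ _ _ (by omega)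

theorem AvoidsPat.sublist {π π' σ : List ℕ} (h : AvoidsPat π' σ) (hπ : π.Sublist π') :
    AvoidsPat π σ :=
  fun hc => h (hc.of_sublist hπ)

theorem AvoidsPat.map {f : ℕ → ℕ} {l σ : List ℕ} (hf : ∀ x ∈ l, ∀ y ∈ l, x < y ↔ f x < f y)
    (h : AvoidsPat l σ) : AvoidsPat (l.map f) σ :=
  fun hc => h (hc.of_map hf)

theorem AvoidsPat.append_of_lt {x y σ : List ℕ} (hσ : ¬ IsSumDecomposable σ)
    (hxy : ∀ a ∈ x, ∀ b ∈ y, a < b) (hx : AvoidsPat x σ) (hy : AvoidsPat y σ) :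
    AvoidsPat (x ++ y) σ := fun hc => by
  rcases hc.of_append_of_lt hxy with h | h | h
  exacts [hx h, hy h, hσ h]

theorem avoidsPat_nil {σ : List ℕ} (hσ : σ ≠ []) : AvoidsPat [] σ := by
  rintro ⟨t, ht, hlen, -⟩
  rw [List.sublist_nil.1 ht] at hlen
  exact hσ (List.length_eq_zero_iff.1 hlen.symm)

theorem containsPat_321 {π : List ℕ} {a b c : ℕ} (hs : [a, b, c].Sublist π) (h₁ : c < b)
    (h₂ : b < a) : ContainsPat π [3, 2, 1] := by
  refine ⟨_, hs, rfl, fun i j hi hj => ?_⟩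
  simp only [List.length_cons, List.length_nil] at hi hj
  interval_cases i <;> interval_cases j <;> simp <;> omega

theorem containsPat_2413 {π : List ℕ} {a b c d : ℕ} (hs : [a, b, c, d].Sublist π) (h₁ : c < a)
    (h₂ : a < d) (h₃ : d < b) : ContainsPat π [2, 4, 1, 3] := by
  refine ⟨_, hs, rfl, fun i j hi hj => ?_⟩
  simp only [List.length_cons, List.length_nil] at hi hj
  interval_cases i <;> interval_cases j <;> simp <;> omega

theorem containsPat_3142 {π : List ℕ} {a b c d : ℕ} (hs : [a, b, c, d].Sublist π) (h₁ : b < d)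
    (h₂ : d < a) (h₃ : a < c) : ContainsPat π [3, 1, 4, 2] := by
  refine ⟨_, hs, rfl, fun i j hi hj => ?_⟩
  simp only [List.length_cons, List.length_nil] at hi hj
  interval_cases i <;> interval_cases j <;> simp <;> omega

namespace AvoidsAll

theorem sublist {π π' : List ℕ} (h : AvoidsAll π') (hπ : π.Sublist π') : AvoidsAll π :=
  ⟨h.1.sublist hπ, h.2.1.sublist hπ, h.2.2.sublist hπ⟩

theorem map {f : ℕ → ℕ} {l : List ℕ} (hf : ∀ x ∈ l, ∀ y ∈ l, x < y ↔ f x < f y)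
    (h : AvoidsAll l) : AvoidsAll (l.map f) :=
  ⟨h.1.map hf, h.2.1.map hf, h.2.2.map hf⟩

theorem append_of_lt {x y : List ℕ} (hxy : ∀ a ∈ x, ∀ b ∈ y, a < b) (hx : AvoidsAll x)
    (hy : AvoidsAll y) : AvoidsAll (x ++ y) := by
  refine ⟨hx.1.append_of_lt ?_ hxy hy.1, hx.2.1.append_of_lt ?_ hxy hy.2.1,
    hx.2.2.append_of_lt ?_ hxy hy.2.2⟩ <;> unfold IsSumDecomposable <;> decide

theorem dsumL {x y : List ℕ} (hx : ∀ a ∈ x, a ≤ x.length) (hy : ∀ b ∈ y, 0 < b)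
    (hxa : AvoidsAll x) (hya : AvoidsAll y) : AvoidsAll (dsumL x y) :=
  hxa.append_of_lt (by
      simp only [List.mem_map]
      rintro a ha _ ⟨b, hb, rfl⟩
      have := hx a ha
      have := hy b hb
      omega)
    (hya.map fun _ _ _ _ => by omega)

end AvoidsAll

theorem avoidsAll_nil : AvoidsAll [] :=
  ⟨avoidsPat_nil (by simp), avoidsPat_nil (by simp), avoidsPat_nil (by simp)⟩

theorem avoidsAll_skewSum_of_increasing {u w : List ℕ} (hu : u.Pairwise (· < ·))
    (hw : w.Pairwise (· < ·)) (huw : ∀ a ∈ u, ∀ b ∈ w, b < a) : AvoidsAll (u ++ w) := by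
  have key : ∀ σ, ¬ IsSkewSumOfIncreasing σ → AvoidsPat (u ++ w) σ :=
    fun _ hσ h => hσ (h.isSkewSumOfIncreasing hu hw huw)
  refine ⟨key _ ?_, key _ ?_, key _ ?_⟩ <;> unfold IsSkewSumOfIncreasing <;> decide

theorem dsumL_nil_left (y : List ℕ) : dsumL [] y = y := by
  simp [dsumL]

theorem dsumL_nil_right (x : List ℕ) : dsumL x [] = x := by
  simp [dsumL]

theorem dsumL_assoc (x y z : List ℕ) : dsumL (dsumL x y) z = dsumL x (dsumL y z) := by
  simp only [dsumL, List.length_append, List.length_map, List.map_append, List.map_map,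
    List.append_assoc]
  congr 3
  funext v
  simp only [Function.comp_apply]
  omega

instance : Std.Associative dsumL := ⟨dsumL_assoc⟩

theorem foldl_dsumL_cons (b : List ℕ) (L : List (List ℕ)) :
    (b :: L).foldl dsumL [] = dsumL b (L.foldl dsumL []) := by
  rw [List.foldl_cons, dsumL_nil_left, ← List.foldl_assoc (op := dsumL), dsumL_nil_right]

namespace IsPermList

variable {n : ℕ} {π : List ℕ}

theorem length_eq (h : IsPermList n π) : π.length = n := by
  simpa using List.Perm.length_eq h

theorem mem_iff (h : IsPermList n π) {v : ℕ} : v ∈ π ↔ 0 < v ∧ v ≤ n := by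
  rw [List.Perm.mem_iff h, List.mem_range'_1]
  omega

theorem nodup (h : IsPermList n π) : π.Nodup :=
  h.nodup_iff.2 List.nodup_range'

theorem dsumL {m k : ℕ} {x y : List ℕ} (hx : IsPermList m x) (hy : IsPermList k y) :
    IsPermList (m + k) (dsumL x y) := by
  have hshift : (List.range' 1 k).map (· + m) = List.range' (1 + m) k := by
    rw [add_comm 1 m, ← List.map_add_range']
    exact List.map_congr_left fun _ _ => add_comm _ _
  rw [IsPermList, _root_.dsumL, hx.length_eq, ← List.range'_append_1]
  exact List.Perm.append hx (hshift ▸ List.Perm.map _ hy)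

theorem ssumL {m k : ℕ} {x y : List ℕ} (hx : IsPermList m x) (hy : IsPermList k y) :
    IsPermList (m + k) (ssumL x y) := by
  have h := hy.dsumL hx
  rw [add_comm, IsPermList, _root_.ssumL, hy.length_eq]
  rw [_root_.dsumL, hy.length_eq] at h
  exact List.perm_append_comm.trans h

theorem perm_range'_of_append {m : ℕ} {x y : List ℕ} (h : IsPermList n (x ++ y))
    (hx : IsPermList m x) : y.Perm (List.range' (1 + m) (n - m)) := by
  have hmn : m ≤ n := by simp [← hx.length_eq, ← h.length_eq]
  rw [IsPermList, ← Nat.add_sub_cancel' hmn, ← List.range'_append_1] at h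
  exact (List.perm_append_left_iff _).1 ((hx.append_right y).symm.trans h)

end IsPermList

theorem isPermList_map_sub {m k : ℕ} {y : List ℕ} (hy : y.Perm (List.range' (1 + m) k)) :
    IsPermList k (y.map (· - m)) := by
  have hshift : (List.range' (1 + m) k).map (· - m) = List.range' 1 k := by
    rw [add_comm, ← List.map_add_range', List.map_map]
    exact (List.map_congr_left fun _ _ => by simp).trans (List.map_id _)
  rw [IsPermList, ← hshift]
  exact hy.map _

theorem dsumL_map_sub {x y : List ℕ} (hy : ∀ v ∈ y, x.length < v) :
    dsumL x (y.map (· - x.length)) = x ++ y := by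
  rw [dsumL, List.map_map]
  exact congrArg _ ((List.map_congr_left fun v hv => Nat.sub_add_cancel (hy v hv).le).trans
    (List.map_id _))

theorem isPermList_idL (r : ℕ) : IsPermList r (idL r) :=
  List.Perm.refl _

theorem avoidsAll_ssumL_idL (r₁ r₂ : ℕ) : AvoidsAll (ssumL (idL r₁) (idL r₂)) :=
  avoidsAll_skewSum_of_increasing
    (List.pairwise_map.2 (List.Pairwise.imp (fun h => by omega) List.pairwise_lt_range'))
    List.pairwise_lt_range' (by simp [idL]; omega)

def IsBlock (b : List ℕ) : Prop :=
  b = [1] ∨ ∃ r₁ r₂ : ℕ, 1 ≤ r₁ ∧ 1 ≤ r₂ ∧ b = ssumL (idL r₁) (idL r₂)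

namespace IsBlock

variable {b : List ℕ}

theorem isPermList (hb : IsBlock b) : IsPermList b.length b := by
  rcases hb with rfl | ⟨r₁, r₂, -, -, rfl⟩
  · exact isPermList_idL 1
  · have h := (isPermList_idL r₁).ssumL (isPermList_idL r₂)
    rwa [h.length_eq]

theorem length_pos (hb : IsBlock b) : 0 < b.length := by
  rcases hb with rfl | ⟨r₁, r₂, h₁, -, rfl⟩
  · simp
  · simp [ssumL, idL]
    omega

theorem avoidsAll (hb : IsBlock b) : AvoidsAll b := by
  rcases hb with rfl | ⟨r₁, r₂, -, -, rfl⟩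
  · exact avoidsAll_ssumL_idL 1 0
  · exact avoidsAll_ssumL_idL r₁ r₂

end IsBlock

theorem pos_of_mem_foldl_dsumL {L : List (List ℕ)} (hL : ∀ b ∈ L, ∀ v ∈ b, 0 < v) :
    ∀ v ∈ L.foldl dsumL [], 0 < v := by
  induction L with
  | nil => simp
  | cons b L ih =>
    rw [foldl_dsumL_cons]
    simp only [dsumL, List.mem_append, List.mem_map]
    rintro v (hv | ⟨w, hw, rfl⟩)
    · exact hL b (by simp) v hv
    · have := ih (fun c hc => hL c (by simp [hc])) w hw
      omega

theorem avoidsAll_foldl_dsumL {L : List (List ℕ)} (hL : ∀ b ∈ L, IsBlock b) :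
    AvoidsAll (L.foldl dsumL []) := by
  induction L with
  | nil => exact avoidsAll_nil
  | cons b L ih =>
    have hL' := List.forall_mem_cons.1 hL
    rw [foldl_dsumL_cons]
    refine hL'.1.avoidsAll.dsumL (fun v hv => (hL'.1.isPermList.mem_iff.1 hv).2)
      (pos_of_mem_foldl_dsumL fun c hc v hv => ?_) (ih hL'.2)
    exact ((hL'.2 c hc).isPermList.mem_iff.1 hv).1

theorem eq_range'_of_pairwise_le {l : List ℕ} {s m : ℕ} (hl : l.Pairwise (· ≤ ·)) (hnd : l.Nodup)
    (hmem : ∀ v, v ∈ l ↔ s ≤ v ∧ v < s + m) : l = List.range' s m :=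
  List.Perm.eq_of_pairwise' hl List.pairwise_le_range'
    ((List.perm_ext_iff_of_nodup hnd List.nodup_range').2 fun v => by rw [hmem, List.mem_range'_1])

theorem exists_interval_before_one {n : ℕ} {P R : List ℕ} (hπ : IsPermList n (P ++ 1 :: R))
    (h321 : AvoidsPat (P ++ 1 :: R) [3, 2, 1]) (h2413 : AvoidsPat (P ++ 1 :: R) [2, 4, 1, 3])
    (hP : P ≠ []) :
    ∃ a c, 2 ≤ a ∧ a ≤ c ∧ P = List.range' a (c + 1 - a) ∧ ∀ w ∈ R, w < a ∨ c < w := by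
  obtain ⟨hndP, hndR, hdisj⟩ := List.nodup_append.1 hπ.nodup
  have hP2 : ∀ v ∈ P, 2 ≤ v := fun v hv => by
    have := hπ.mem_iff.1 (List.mem_append_left _ hv)
    have := hdisj v hv 1 List.mem_cons_self
    omega
  have hsorted : P.Pairwise (· ≤ ·) := List.pairwise_iff_forall_sublist.2 fun hxy =>
    not_lt.1 fun hyx => h321 (containsPat_321 (hxy.append (List.cons_sublist_cons.2
      (List.nil_sublist R))) (hP2 _ (hxy.subset (by simp))) hyx)
  obtain ⟨c, hcP, hc⟩ := P.toFinset.exists_max_image id ((List.toFinset_nonempty_iff _).2 hP)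
  rw [List.mem_toFinset] at hcP
  simp only [List.mem_toFinset, id] at hc
  obtain ⟨a, P', rfl⟩ := List.exists_cons_of_ne_nil hP
  have ha : ∀ v ∈ a :: P', a ≤ v :=
    List.forall_mem_cons.2 ⟨le_rfl, (List.pairwise_cons.1 hsorted).1⟩
  have ha2 := hP2 a List.mem_cons_self
  have hac := ha c hcP
  have hR : ∀ w ∈ R, w < a ∨ c < w := fun w hw => by
    by_contra! haw
    have hwa := hdisj a List.mem_cons_self w (List.mem_cons_of_mem 1 hw)
    have hwc := hdisj c hcP w (List.mem_cons_of_mem 1 hw)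
    have hcP' : c ∈ P' := (List.mem_cons.1 hcP).resolve_left (by omega)
    exact h2413 (containsPat_2413
      ((List.cons_sublist_cons.2 (List.singleton_sublist.2 hcP')).append
        (List.cons_sublist_cons.2 (List.singleton_sublist.2 hw))) (by omega) (by omega) (by omega))
  refine ⟨a, c, ha2, hac, eq_range'_of_pairwise_le hsorted hndP fun v => ?_, hR⟩
  refine ⟨fun hv => ⟨ha v hv, by have := hc v hv; omega⟩, fun hv => ?_⟩
  have hcn := (hπ.mem_iff.1 (List.mem_append_left _ hcP)).2
  rcases List.mem_append.1 (hπ.mem_iff (v := v) |>.2 ⟨by omega, by omega⟩) with hvP | hvR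
  · exact hvP
  · rcases List.mem_cons.1 hvR with rfl | hvR
    · omega
    · have := hR v hvR
      omega

theorem takeWhile_after_one_eq_range' {n a c : ℕ} {P R : List ℕ}
    (hπ : IsPermList n (P ++ 1 :: R)) (h321 : AvoidsPat (P ++ 1 :: R) [3, 2, 1])
    (h3142 : AvoidsPat (P ++ 1 :: R) [3, 1, 4, 2]) (hP : ∀ v, v ∈ P ↔ a ≤ v ∧ v ≤ c)
    (hac : a ≤ c) (hR : ∀ w ∈ R, w < a ∨ c < w) :
    R.takeWhile (· < a) = List.range' 2 (a - 2) := by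
  have haP := (hP a).2 ⟨le_rfl, hac⟩
  have hcP := (hP c).2 ⟨hac, le_rfl⟩
  have han := (hπ.mem_iff.1 (List.mem_append_left _ haP)).2
  obtain ⟨-, hndR, -⟩ := List.nodup_append.1 hπ.nodup
  have hR2 : ∀ w ∈ R, 2 ≤ w := fun w hw => by
    have := hπ.mem_iff.1 (List.mem_append_right P (List.mem_cons_of_mem 1 hw))
    have : w ≠ 1 := fun h => (List.nodup_cons.1 hndR).1 (h ▸ hw)
    omega
  have hSa : ∀ w ∈ R.takeWhile (· < a), w < a := fun w hw => by
    simpa using List.mem_takeWhile_imp hw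
  have hhead := List.head?_dropWhile_not (fun v => decide (v < a)) R
  have hRST := List.takeWhile_append_dropWhile (p := fun v => decide (v < a)) (l := R)
  generalize R.takeWhile (fun v => decide (v < a)) = S at hSa hRST ⊢
  generalize R.dropWhile (fun v => decide (v < a)) = T at hhead hRST
  subst hRST
  have hT : ∀ w ∈ T, c < w := by
    rcases T with _ | ⟨z, T'⟩
    · simp
    have hz : c < z := (hR z (by simp)).resolve_left (by simpa using hhead)
    refine List.forall_mem_cons.2 ⟨hz, fun w hw => (hR w (by simp [hw])).resolve_left fun hwa => ?_⟩
    have hzw : [z, w].Sublist (S ++ z :: T') :=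
      (List.cons_sublist_cons.2 (List.singleton_sublist.2 hw)).trans (List.sublist_append_right S _)
    have hw2 := hR2 w (by simp [hw])
    exact h3142 (containsPat_3142 ((List.singleton_sublist.2 hcP).append
      (List.cons_sublist_cons.2 hzw)) (by omega) (by omega) hz)
  have hsorted : S.Pairwise (· ≤ ·) := List.pairwise_iff_forall_sublist.2 fun hxy =>
    not_lt.1 fun hyx => h321 (containsPat_321 ((List.singleton_sublist.2 haP).append
      ((hxy.trans (List.sublist_append_left S T)).cons 1)) hyx (hSa _ (hxy.subset (by simp))))
  refine eq_range'_of_pairwise_le hsorted (List.nodup_append.1 (List.nodup_cons.1 hndR).2).1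
    fun v => ⟨fun hv => ⟨hR2 v (List.mem_append_left T hv), by have := hSa v hv; omega⟩,
      fun hv => ?_⟩
  rcases List.mem_append.1 (hπ.mem_iff (v := v) |>.2 ⟨by omega, by omega⟩) with hvP | hvR
  · have := (hP v).1 hvP
    omega
  rcases List.mem_cons.1 hvR with rfl | hvR
  · omega
  rcases List.mem_append.1 hvR with hvS | hvT
  · exact hvS
  · have := hT v hvT
    omega

theorem ssumL_idL_idL_succ (r₁ r₂ : ℕ) :
    ssumL (idL r₁) (idL (r₂ + 1)) = List.range' (r₂ + 2) r₁ ++ 1 :: List.range' 2 r₂ := by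
  rw [ssumL, idL, idL, List.length_range', List.range'_succ,
    show r₂ + 2 = r₂ + 1 + 1 by omega, ← List.map_add_range' (a := r₂ + 1) 1 r₁]
  exact congrArg (· ++ _) (List.map_congr_left fun _ _ => by omega)

theorem exists_block_prefix {n : ℕ} {π : List ℕ} (hπ : IsPermList n π) (hn : 0 < n)
    (hav : AvoidsAll π) : ∃ B T, IsBlock B ∧ π = B ++ T := by
  obtain ⟨P, R, rfl⟩ := List.append_of_mem (hπ.mem_iff (v := 1) |>.2 ⟨one_pos, hn⟩)
  rcases eq_or_ne P [] with rfl | hP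
  · exact ⟨[1], R, Or.inl rfl, rfl⟩
  obtain ⟨a, c, ha, hac, rfl, hR⟩ := exists_interval_before_one hπ hav.1 hav.2.1 hP
  have hS := takeWhile_after_one_eq_range' hπ hav.1 hav.2.2
    (fun v => by rw [List.mem_range'_1]; omega) hac hR
  obtain ⟨b, rfl⟩ : ∃ b, a = b + 2 := ⟨a - 2, by omega⟩
  refine ⟨ssumL (idL (c + 1 - (b + 2))) (idL (b + 1)), R.dropWhile (· < b + 2),
    Or.inr ⟨_, _, by omega, le_add_self, rfl⟩, ?_⟩
  conv_lhs => rw [← List.takeWhile_append_dropWhile (p := fun v => decide (v < b + 2)) (l := R)]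
  rw [hS, ssumL_idL_idL_succ]
  simp

theorem exists_block_decomposition {n : ℕ} {π : List ℕ} (hπ : IsPermList n π)
    (hav : AvoidsAll π) : ∃ L : List (List ℕ), (∀ b ∈ L, IsBlock b) ∧ π = L.foldl dsumL [] := by
  induction n using Nat.strong_induction_on generalizing π with
  | _ n ih =>
  rcases Nat.eq_zero_or_pos n with rfl | hn
  · exact ⟨[], by simp, List.length_eq_zero_iff.1 hπ.length_eq⟩
  obtain ⟨B, T, hB, rfl⟩ := exists_block_prefix hπ hn hav
  have hT := hπ.perm_range'_of_append hB.isPermList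
  have hTB : ∀ v ∈ T, B.length < v := fun v hv => by
    have := List.mem_range'_1.1 (hT.mem_iff.1 hv)
    omega
  obtain ⟨L, hL, hLT⟩ := ih (n - B.length) (by have := hB.length_pos; omega)
    (isPermList_map_sub hT) ((hav.sublist (List.sublist_append_right B T)).map
      fun x hx y hy => by have := hTB x hx; have := hTB y hy; omega)
  refine ⟨B :: L, List.forall_mem_cons.2 ⟨hB, hL⟩, ?_⟩
  rw [foldl_dsumL_cons, ← hLT, dsumL_map_sub hTB]

/-- A permutation of `[n]` avoids 321, 2413 and 3142 iff it is a direct sum of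
blocks each of which is the trivial permutation `1` or of the form
`id_{r1} ⊖ id_{r2}` with `r1, r2 ≥ 1`. -/
theorem avoids_iff_directSum_decomposition (n : ℕ) (π : List ℕ) (hπ : IsPermList n π) :
    AvoidsAll π ↔
      ∃ L : List (List ℕ),
        (∀ b ∈ L, b = [1] ∨ ∃ r1 r2 : ℕ, 1 ≤ r1 ∧ 1 ≤ r2 ∧ b = ssumL (idL r1) (idL r2)) ∧
        π = L.foldl dsumL [] := by
  refine ⟨exists_block_decomposition hπ, ?_⟩
  rintro ⟨L, hL, rfl⟩
  exact avoidsAll_foldl_dsumL hL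
end

section
/- For every n ≥ 2, the number of sequences of 'clusters' on [n] equals F_{2n−1}: a list of clusters is determined by choosing k numbers from [n] (k = 0 or 2 ≤ k ≤ n) and a composition of k into parts each at least 2; hence the count is 1 + ∑_{k=2}^{n} C(n,k) F_{k−1} = F_{2n−1}. -/
/-!
Recording its set of entries and its block sizes identifies a list of clusters in `s` with a
subset `t ⊆ s` together with a composition of `#t` into parts `≥ 2`. Such compositions of `k`
satisfy the Fibonacci recursion (drop a leading part `2`, or decrement a leading part `≥ 3`), so
there are `F_{k-1}` of them for `k ≥ 1`, and the binomial transform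
`∑ₖ C(n,k) F_{k+m} = F_{2n+m}` turns the total into `F_{2n+1} - F_{2n} = F_{2n-1}`.
-/

open Finset

theorem sum_choose_mul_fib_add (n m : ℕ) :
    ∑ k ∈ range (n + 1), n.choose k * Nat.fib (k + m) = Nat.fib (2 * n + m) := by
  induction n generalizing m with
  | zero => simp
  | succ n ih =>
    have pascal := sum_choose_succ_mul (R := ℕ) (fun k _ => Nat.fib (k + m)) n
    simp only [Nat.cast_id, add_assoc] at pascal
    rw [pascal, ih, ih, show 2 * (n + 1) + m = 2 * n + m + 2 by ring, Nat.fib_add_two]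
    ring_nf

abbrev CompositionGeTwo (k : ℕ) : Type := {l : List ℕ // (∀ x ∈ l, 2 ≤ x) ∧ l.sum = k}

def CompositionGeTwo.toComposition {k : ℕ} (c : CompositionGeTwo k) : Composition k :=
  ⟨c.1, fun hi ↦ by have := c.2.1 _ hi; omega, c.2.2⟩

instance (k : ℕ) : Finite (CompositionGeTwo k) :=
  Finite.of_injective CompositionGeTwo.toComposition
    fun _ _ h ↦ Subtype.ext (congrArg Composition.blocks h)

def CompositionGeTwo.bumpHeadOrConsTwo (k : ℕ) :
    CompositionGeTwo (k + 1) ⊕ CompositionGeTwo k → CompositionGeTwo (k + 2)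
  | .inl ⟨a :: t, h⟩ => ⟨(a + 1) :: t, by simp_all; omega, by simp_all; omega⟩
  | .inl ⟨[], h⟩ => absurd h.2 (by simp)
  | .inr ⟨l, h⟩ => ⟨2 :: l, by simp_all, by simp_all; omega⟩

theorem CompositionGeTwo.bijective_bumpHeadOrConsTwo (k : ℕ) :
    Function.Bijective (bumpHeadOrConsTwo k) := by
  constructor
  · rintro (⟨_ | ⟨a, t⟩, h⟩ | ⟨l, h⟩) (⟨_ | ⟨b, s⟩, h'⟩ | ⟨l', h'⟩) heq
    all_goals try (simp at h; done)
    all_goals try (simp at h'; done)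
    all_goals simp only [bumpHeadOrConsTwo, Subtype.mk.injEq, List.cons.injEq, Sum.inl.injEq,
      Sum.inr.injEq, reduceCtorEq] at heq ⊢
    · exact ⟨by omega, heq.2⟩
    · have := h.1 a List.mem_cons_self; omega
    · have := h'.1 b List.mem_cons_self; omega
    · exact heq.2
  · rintro ⟨_ | ⟨a, t⟩, h⟩
    · simp at h
    · simp only [List.forall_mem_cons, List.sum_cons] at h
      by_cases ha : a = 2
      · subst ha
        exact ⟨.inr ⟨t, h.1.2, by omega⟩, rfl⟩
      · refine ⟨.inl ⟨(a - 1) :: t, ?_, ?_⟩, ?_⟩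
        all_goals simp_all [bumpHeadOrConsTwo]
        all_goals omega

theorem CompositionGeTwo.card_zero : Nat.card (CompositionGeTwo 0) = 1 := by
  refine Nat.card_eq_one_iff_exists.2 ⟨⟨[], by simp, rfl⟩, fun ⟨l, hge, hsum⟩ ↦ ?_⟩
  rw [List.sum_eq_zero_iff] at hsum
  exact Subtype.ext <| List.eq_nil_iff_forall_not_mem.2 fun x hx ↦ by
    have := hge x hx; have := hsum x hx; omega

theorem CompositionGeTwo.card_one : Nat.card (CompositionGeTwo 1) = 0 := by
  refine Nat.card_eq_zero.2 (.inl ⟨fun ⟨l, hge, hsum⟩ ↦ ?_⟩)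
  cases l with
  | nil => simp at hsum
  | cons a t =>
    have := hge a List.mem_cons_self
    have := hsum ▸ List.le_sum_of_mem List.mem_cons_self
    omega

theorem CompositionGeTwo.card_add_two (k : ℕ) :
    Nat.card (CompositionGeTwo (k + 2)) =
      Nat.card (CompositionGeTwo (k + 1)) + Nat.card (CompositionGeTwo k) := by
  rw [← Nat.card_eq_of_bijective _ (bijective_bumpHeadOrConsTwo k), Nat.card_sum]

/-- The count is `F_{k-1}` for `k ≥ 1` but `1` for `k = 0`; this form covers both without
truncated subtraction. -/
theorem CompositionGeTwo.card_add_fib (k : ℕ) :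
    Nat.card (CompositionGeTwo k) + Nat.fib k = Nat.fib (k + 1) := by
  induction k using Nat.twoStepInduction with
  | zero => simp [card_zero]
  | one => simp [card_one]
  | more k ih₀ ih₁ =>
    have ih₁ : _ = Nat.fib (k + 2) := ih₁
    have h₂ : Nat.fib (k + 2) = Nat.fib k + Nat.fib (k + 1) := Nat.fib_add_two
    have h₃ : Nat.fib (k + 2 + 1) = Nat.fib (k + 1) + Nat.fib (k + 2) := Nat.fib_add_two
    rw [card_add_two]
    omega

theorem sum_choose_mul_card_compositionGeTwo {n : ℕ} (hn : 0 < n) :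
    ∑ k ∈ range (n + 1), n.choose k * Nat.card (CompositionGeTwo k) = Nat.fib (2 * n - 1) := by
  have key : ∑ k ∈ range (n + 1), n.choose k * Nat.card (CompositionGeTwo k) + Nat.fib (2 * n) =
      Nat.fib (2 * n + 1) := by
    rw [← sum_choose_mul_fib_add, ← add_zero (2 * n), ← sum_choose_mul_fib_add,
      ← sum_add_distrib]
    simp_rw [add_zero, ← mul_add, CompositionGeTwo.card_add_fib]
  have fib_odd : Nat.fib (2 * n + 1) = Nat.fib (2 * n - 1) + Nat.fib (2 * n) := by
    simpa [show 2 * n - 1 + 1 = 2 * n by omega, show 2 * n - 1 + 2 = 2 * n + 1 by omega]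
      using Nat.fib_add_two (n := 2 * n - 1)
  omega

theorem card_sigma_powerset_compositionGeTwo {α : Type*} (s : Finset α) :
    Nat.card (Σ t : s.powerset, CompositionGeTwo (t : Finset α).card) =
      ∑ k ∈ range (#s + 1), (#s).choose k * Nat.card (CompositionGeTwo k) := by
  rw [Nat.card_sigma, sum_coe_sort s.powerset (fun t ↦ Nat.card (CompositionGeTwo #t)),
    sum_powerset_apply_card (fun k ↦ Nat.card (CompositionGeTwo k))]
  simp only [smul_eq_mul]

section ClusterList

variable {α : Type*} [LinearOrder α]

abbrev ClusterList (s : Finset α) : Type _ :=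
  {L : List (List α) //
    (∀ b ∈ L, 2 ≤ b.length) ∧ L.flatten.Pairwise (· < ·) ∧ ∀ x ∈ L.flatten, x ∈ s}

def clusterListEquiv (s : Finset α) :
    ClusterList s ≃ Σ t : s.powerset, CompositionGeTwo (t : Finset α).card where
  toFun L := ⟨⟨L.1.flatten.toFinset, by simpa [subset_iff] using L.2.2.2⟩,
    L.1.map List.length, by simpa using L.2.1, by
      rw [← List.length_flatten, List.toFinset_card_of_nodup (L.2.2.1.imp ne_of_lt)]⟩
  invFun c := ⟨c.1.1.sort.splitWrtComposition (c.2.toComposition.cast (length_sort _).symm),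
    fun b hb ↦ c.2.2.1 _ <| by
      have := List.mem_map_of_mem (f := List.length) hb
      rwa [List.map_length_splitWrtComposition] at this,
    by simpa [List.flatten_splitWrtComposition] using (sortedLT_sort _).pairwise,
    fun x hx ↦ by
      rw [List.flatten_splitWrtComposition, mem_sort] at hx
      exact mem_powerset.1 c.1.2 hx⟩
  left_inv L := by
    have hsort : L.1.flatten.toFinset.sort = L.1.flatten :=
      (List.toFinset_sort _ (L.2.2.1.imp ne_of_lt)).2 (L.2.2.1.imp le_of_lt)
    ext1
    rw [List.eq_iff_flatten_eq, List.flatten_splitWrtComposition,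
      List.map_length_splitWrtComposition]
    exact ⟨hsort, rfl⟩
  right_inv c := by
    refine Sigma.subtype_ext (Subtype.ext ?_) (List.map_length_splitWrtComposition _ _)
    simp [List.flatten_splitWrtComposition]

theorem card_clusterList {s : Finset α} (hs : s.Nonempty) :
    Nat.card (ClusterList s) = Nat.fib (2 * #s - 1) := by
  rw [Nat.card_congr (clusterListEquiv s), card_sigma_powerset_compositionGeTwo,
    sum_choose_mul_card_compositionGeTwo hs.card_pos]

end ClusterList

/-- The number of lists of clusters on `[n]` equals `F_{2n-1}`: a list of
clusters is a list of blocks, each of size at least 2, whose concatenation is a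
strictly increasing sequence of elements of `[n]`. -/
theorem cluster_lists_card (n : ℕ) (hn : 2 ≤ n) :
    Nat.card {L : List (List ℕ) //
        (∀ b ∈ L, 2 ≤ b.length) ∧
        L.flatten.Pairwise (· < ·) ∧
        (∀ x ∈ L.flatten, 1 ≤ x ∧ x ≤ n)} = Nat.fib (2 * n - 1) := by
  calc _ = Nat.card (ClusterList (Icc 1 n)) :=
        Nat.card_congr (Equiv.subtypeEquivRight fun L ↦ by simp only [mem_Icc])
    _ = Nat.fib (2 * n - 1) := by
      rw [card_clusterList (nonempty_Icc.2 (by omega)), Nat.card_Icc, Nat.add_sub_cancel]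
end
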